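/- Precision of ideal proxy objects: let Π be the points-to set computed by the static analysis with all code available (Π_miss = ∅, analyzing both program and library statements). Then (i) for program allocation o ∈ O_P, x↪o ∈ Π̃* implies x↪o ∈ Π, and (ii) for ideal proxy p̃ = φ̃(ō) with ō allocated at library site o ∈ O_L, x↪p̃ ∈ Π̃* implies x↪o ∈ Π. -/

import Mathlib

/-- Events (statement steps): allocation, assignment, load, store, and library
call (which assigns the returned concrete object `c` to `x`). -/
inductive Ev (V F M O CO : Type) where
  | alloc (x : V) (o : O) (c : CO)
  | assign (x y : V)
  | load (x y : V) (f : F)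
  | store (x : V) (f : F) (y : V)
  | call (x : V) (m : M) (y : V) (c : CO)

/-- A state: environment and heap. -/
structure St (V F CO : Type) where
  env : V → Option CO
  heap : CO → F → Option CO

/-- Small-step semantics of a single statement. Since only program code is
modeled (library effects appear only as call-return events), all heap writes use
program fields: the disjoint fields assumption is built in. -/
def step {V F M O CO : Type} [DecidableEq V] [DecidableEq F] [DecidableEq CO]
    (σ : St V F CO) : Ev V F M O CO → St V F CO
  | .alloc x _ c => ⟨Function.update σ.env x (some c), σ.heap⟩
  | .assign x y => ⟨Function.update σ.env x (σ.env y), σ.heap⟩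
  | .load x y f => ⟨Function.update σ.env x (σ.env y >>= fun c => σ.heap c f), σ.heap⟩
  | .store x f y =>
      ⟨σ.env, fun c g => if σ.env x = some c ∧ g = f then σ.env y else σ.heap c g⟩
  | .call x _ _ c => ⟨Function.update σ.env x (some c), σ.heap⟩

def runs {V F M O CO : Type} [DecidableEq V] [DecidableEq F] [DecidableEq CO]
    (σ0 : St V F CO) (tr : List (Ev V F M O CO)) : St V F CO :=
  tr.foldl step σ0

/-- The state reached after the first `i` steps of the trace. -/
def stateAt {V F M O CO : Type} [DecidableEq V] [DecidableEq F] [DecidableEq CO]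
    (σ0 : St V F CO) (tr : List (Ev V F M O CO)) (i : ℕ) : St V F CO :=
  runs σ0 (tr.take i)

/-- The dynamic footprint of a concrete object `c`: the set of visible variables
that ever point to `c` during the execution. This is the ideal proxy object of a
concrete object allocated in missing code. -/
def footprint {V F M O CO : Type} [DecidableEq V] [DecidableEq F] [DecidableEq CO]
    (σ0 : St V F CO) (tr : List (Ev V F M O CO)) (c : CO) : Set V :=
  {v | ∃ i, (stateAt σ0 tr i).env v = some c}

/-- The points-to relation `Π̃*`: the least relation over abstract objects
`O ⊕ Set V` (program allocation sites and ideal proxy objects) closed under the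
static rules and containing all missing edges `Π̃*_miss`, i.e. the edges arising
at library-call assignments during the execution (rules `missProg` and
`missProxy`). -/
inductive PDerives {V F M O CO : Type} [DecidableEq V] [DecidableEq F] [DecidableEq CO]
    (σ0 : St V F CO) (tr : List (Ev V F M O CO)) : V → O ⊕ Set V → Prop where
  | alloc {x o c} : Ev.alloc x o c ∈ tr → PDerives σ0 tr x (Sum.inl o)
  | assign {x y a} : Ev.assign x y ∈ tr → PDerives σ0 tr y a → PDerives σ0 tr x a
  | loadstore {x y z w : V} {f : F} {a a' : O ⊕ Set V} :
      Ev.load x y f ∈ tr → Ev.store z f w ∈ tr →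
      PDerives σ0 tr y a' → PDerives σ0 tr z a' → PDerives σ0 tr w a →
      PDerives σ0 tr x a
  | missProg {x : V} {m : M} {y x' : V} {o : O} {c : CO} :
      Ev.call x m y c ∈ tr → Ev.alloc x' o c ∈ tr → PDerives σ0 tr x (Sum.inl o)
  | missProxy {x : V} {m : M} {y : V} {c : CO} :
      Ev.call x m y c ∈ tr → (∀ (x' : V) (o : O), Ev.alloc x' o c ∉ tr) →
      PDerives σ0 tr x (Sum.inr (footprint σ0 tr c))

/-! Every concrete object `c` has an abstraction in the full-code analysis: its program
allocation site if the program allocates it, its library site `lsite c` otherwise. By induction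
along the trace, the full-code analysis is sound: a variable or heap cell pointing to `c` has an
edge to the abstraction of `c`. Soundness is what handles ideal proxies: a variable in the proxy
`footprint c` of a library object `c` has pointed to `c` at some time, hence has the edge to
`lsite c`. The claim then follows by induction on the derivation in `Π̃*`, reading an ideal
proxy `S` as `lsite c` for any library object `c` with footprint `S`. -/

section PointsTo

variable {V F M OP OL CO : Type}

structure FullCodeClosed (tr : List (Ev V F M OP CO)) (lsite : CO → OL)
    (Pi : Set (V × (OP ⊕ OL))) : Prop where
  alloc : ∀ (x : V) (o : OP) (c : CO), Ev.alloc x o c ∈ tr → (x, Sum.inl o) ∈ Pi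
  assign : ∀ (x y : V) (a : OP ⊕ OL), Ev.assign x y ∈ tr → (y, a) ∈ Pi → (x, a) ∈ Pi
  loadStore : ∀ (x y z w : V) (f : F) (a a' : OP ⊕ OL),
    Ev.load x y f ∈ tr → Ev.store z f w ∈ tr →
    (y, a') ∈ Pi → (z, a') ∈ Pi → (w, a) ∈ Pi → (x, a) ∈ Pi
  missProg : ∀ (x : V) (m : M) (y x' : V) (o : OP) (c : CO),
    Ev.call x m y c ∈ tr → Ev.alloc x' o c ∈ tr → (x, Sum.inl o) ∈ Pi
  missLib : ∀ (x : V) (m : M) (y : V) (c : CO),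
    Ev.call x m y c ∈ tr → (∀ (x' : V) (o : OP), Ev.alloc x' o c ∉ tr) →
    (x, Sum.inr (lsite c)) ∈ Pi

def AllocSiteUnique (tr : List (Ev V F M OP CO)) : Prop :=
  ∀ (x x' : V) (o o' : OP) (c : CO), Ev.alloc x o c ∈ tr → Ev.alloc x' o' c ∈ tr → o = o'

open Classical in
noncomputable def absObj (tr : List (Ev V F M OP CO)) (lsite : CO → OL) (c : CO) : OP ⊕ OL :=
  if h : ∃ o x, Ev.alloc x o c ∈ tr then Sum.inl h.choose else Sum.inr (lsite c)

lemma absObj_of_mem {tr : List (Ev V F M OP CO)} {lsite : CO → OL}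
    (hsite : AllocSiteUnique tr) {x : V} {o : OP} {c : CO} (h : Ev.alloc x o c ∈ tr) :
    absObj tr lsite c = Sum.inl o := by
  have hex : ∃ o x, Ev.alloc x o c ∈ tr := ⟨o, x, h⟩
  rw [absObj, dif_pos hex, hsite _ _ _ _ _ hex.choose_spec.choose_spec h]

lemma absObj_of_forall_not_mem {tr : List (Ev V F M OP CO)} {lsite : CO → OL} {c : CO}
    (h : ∀ (x : V) (o : OP), Ev.alloc x o c ∉ tr) :
    absObj tr lsite c = Sum.inr (lsite c) := by
  rw [absObj, dif_neg]
  rintro ⟨o, x, hx⟩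
  exact h x o hx

lemma AllocSiteUnique.of_getElem? {tr : List (Ev V F M OP CO)}
    (hUniq : ∀ (i j : ℕ) (x x' : V) (o o' : OP) (c : CO),
      tr[i]? = some (Ev.alloc x o c) → tr[j]? = some (Ev.alloc x' o' c) → i = j) :
    AllocSiteUnique tr := by
  intro x x' o o' c h h'
  obtain ⟨i, hi⟩ := List.mem_iff_getElem?.mp h
  obtain ⟨j, hj⟩ := List.mem_iff_getElem?.mp h'
  obtain rfl := hUniq i j x x' o o' c hi hj
  simp_all

structure StateSound (tr : List (Ev V F M OP CO)) (lsite : CO → OL)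
    (Pi : Set (V × (OP ⊕ OL))) (σ : St V F CO) : Prop where
  env : ∀ v c, σ.env v = some c → (v, absObj tr lsite c) ∈ Pi
  heap : ∀ c f c', σ.heap c f = some c' →
    ∃ z w, Ev.store z f w ∈ tr ∧ (z, absObj tr lsite c) ∈ Pi ∧ (w, absObj tr lsite c') ∈ Pi

namespace StateSound

variable [DecidableEq V] {tr : List (Ev V F M OP CO)} {lsite : CO → OL}
  {Pi : Set (V × (OP ⊕ OL))} {σ : St V F CO}

lemma update_env (hσ : StateSound tr lsite Pi σ) {x : V} {r : Option CO}
    (hr : ∀ c, r = some c → (x, absObj tr lsite c) ∈ Pi) :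
    StateSound tr lsite Pi ⟨Function.update σ.env x r, σ.heap⟩ := by
  refine ⟨fun v c hv => ?_, hσ.heap⟩
  by_cases hvx : v = x
  · subst hvx
    exact hr c (by simpa using hv)
  · exact hσ.env v c (by simpa [Function.update_of_ne hvx] using hv)

variable [DecidableEq F] [DecidableEq CO]

lemma step (hPi : FullCodeClosed tr lsite Pi) (hsite : AllocSiteUnique tr)
    (hσ : StateSound tr lsite Pi σ) {e : Ev V F M OP CO} (he : e ∈ tr) :
    StateSound tr lsite Pi (step σ e) := by
  cases e with
  | alloc x o c =>
    refine hσ.update_env fun c' hc => ?_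
    cases hc
    rw [absObj_of_mem hsite he]
    exact hPi.alloc x o c he
  | assign x y => exact hσ.update_env fun c hc => hPi.assign x y _ he (hσ.env y c hc)
  | load x y f =>
    refine hσ.update_env fun c hc => ?_
    obtain ⟨cy, hy, hcy⟩ := Option.bind_eq_some_iff.mp hc
    obtain ⟨z, w, hstore, hz, hw⟩ := hσ.heap cy f c hcy
    exact hPi.loadStore x y z w f _ _ he hstore (hσ.env y cy hy) hz hw
  | store x f y =>
    refine ⟨hσ.env, fun c g c' hc => ?_⟩
    dsimp only [_root_.step] at hc
    split_ifs at hc with hxc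
    · obtain ⟨hx, rfl⟩ := hxc
      exact ⟨x, y, he, hσ.env x c hx, hσ.env y c' hc⟩
    · exact hσ.heap c g c' hc
  | call x m y c =>
    refine hσ.update_env fun c' hc => ?_
    cases hc
    by_cases hprog : ∃ x' o, Ev.alloc x' o c ∈ tr
    · obtain ⟨x', o, halloc⟩ := hprog
      rw [absObj_of_mem hsite halloc]
      exact hPi.missProg x m y x' o c he halloc
    · push Not at hprog
      rw [absObj_of_forall_not_mem hprog]
      exact hPi.missLib x m y c he hprog

end StateSound

variable [DecidableEq V] [DecidableEq F] [DecidableEq CO]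

lemma stateAt_succ_of_getElem? {σ0 : St V F CO} {tr : List (Ev V F M OP CO)} {i : ℕ}
    {e : Ev V F M OP CO} (h : tr[i]? = some e) :
    stateAt σ0 tr (i + 1) = step (stateAt σ0 tr i) e := by
  simp [stateAt, runs, List.take_add_one, h, List.foldl_append]

lemma stateAt_succ_of_getElem?_eq_none {σ0 : St V F CO} {tr : List (Ev V F M OP CO)} {i : ℕ}
    (h : tr[i]? = none) : stateAt σ0 tr (i + 1) = stateAt σ0 tr i := by
  simp [stateAt, runs, List.take_add_one, h]

lemma stateSound_stateAt {σ0 : St V F CO} {tr : List (Ev V F M OP CO)} {lsite : CO → OL}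
    {Pi : Set (V × (OP ⊕ OL))} (hPi : FullCodeClosed tr lsite Pi) (hsite : AllocSiteUnique tr)
    (hEnv : ∀ v, σ0.env v = none) (hHeap : ∀ c f, σ0.heap c f = none) (i : ℕ) :
    StateSound tr lsite Pi (stateAt σ0 tr i) := by
  induction i with
  | zero =>
    refine ⟨fun v c hv => ?_, fun c f c' hc => ?_⟩
    · simp [stateAt, runs, hEnv] at hv
    · simp [stateAt, runs, hHeap] at hc
  | succ i ih =>
    cases h : tr[i]? with
    | none => rwa [stateAt_succ_of_getElem?_eq_none h]
    | some e =>
      rw [stateAt_succ_of_getElem? h]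
      exact ih.step hPi hsite (List.mem_of_getElem? h)

lemma mem_footprint_of_call_mem {σ0 : St V F CO} {tr : List (Ev V F M OP CO)} {x y : V} {m : M}
    {c : CO} (h : Ev.call x m y c ∈ tr) : x ∈ footprint σ0 tr c := by
  obtain ⟨i, hi⟩ := List.mem_iff_getElem?.mp h
  exact ⟨i + 1, by simp [stateAt_succ_of_getElem? hi, step]⟩

lemma mem_of_mem_footprint {σ0 : St V F CO} {tr : List (Ev V F M OP CO)} {lsite : CO → OL}
    {Pi : Set (V × (OP ⊕ OL))} (hsound : ∀ i, StateSound tr lsite Pi (stateAt σ0 tr i))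
    {x : V} {c : CO} (hlib : ∀ (x' : V) (o : OP), Ev.alloc x' o c ∉ tr)
    (hx : x ∈ footprint σ0 tr c) : (x, Sum.inr (lsite c)) ∈ Pi := by
  obtain ⟨i, hi⟩ := hx
  simpa [absObj_of_forall_not_mem hlib] using (hsound i).env x c hi

/-- An ideal proxy `S` stands for the library site of every library object with footprint `S`. -/
def fullCodeImage (σ0 : St V F CO) (tr : List (Ev V F M OP CO)) (lsite : CO → OL) :
    OP ⊕ Set V → Set (OP ⊕ OL)
  | .inl o => {.inl o}
  | .inr S => {b | ∃ c, (∀ (x : V) (o : OP), Ev.alloc x o c ∉ tr) ∧ footprint σ0 tr c = S ∧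
      b = .inr (lsite c)}

namespace PDerives

variable {σ0 : St V F CO} {tr : List (Ev V F M OP CO)} {lsite : CO → OL} {x : V}
  {a : OP ⊕ Set V}

lemma fullCodeImage_nonempty (h : PDerives σ0 tr x a) :
    (fullCodeImage σ0 tr lsite a).Nonempty := by
  induction h with
  | alloc => exact ⟨_, rfl⟩
  | assign _ _ ih => exact ih
  | loadstore _ _ _ _ _ _ _ ih => exact ih
  | missProg => exact ⟨_, rfl⟩
  | missProxy _ hlib => exact ⟨_, _, hlib, rfl, rfl⟩

lemma mem_of_mem_fullCodeImage {Pi : Set (V × (OP ⊕ OL))} (hPi : FullCodeClosed tr lsite Pi)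
    (hsound : ∀ i, StateSound tr lsite Pi (stateAt σ0 tr i)) (h : PDerives σ0 tr x a)
    {b : OP ⊕ OL} (hb : b ∈ fullCodeImage σ0 tr lsite a) : (x, b) ∈ Pi := by
  induction h generalizing b with
  | @alloc x o c halloc =>
    obtain rfl : b = .inl o := hb
    exact hPi.alloc x o c halloc
  | @assign x y _ hassign _ ih => exact hPi.assign x y b hassign (ih hb)
  | @loadstore x y z w f _ _ hload hstore hy _ _ ihy ihz ihw =>
    obtain ⟨b', hb'⟩ := hy.fullCodeImage_nonempty (lsite := lsite)
    exact hPi.loadStore x y z w f b b' hload hstore (ihy hb') (ihz hb') (ihw hb)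
  | @missProg x m y x' o c hcall halloc =>
    obtain rfl : b = .inl o := hb
    exact hPi.missProg x m y x' o c hcall halloc
  | missProxy hcall _ =>
    obtain ⟨c', hlib', hfp, rfl⟩ := hb
    exact mem_of_mem_footprint hsound hlib' (hfp ▸ mem_footprint_of_call_mem hcall)

end PDerives

end PointsTo

theorem stmt12_general {V F M OP OL CO : Type} [DecidableEq V] [DecidableEq F] [DecidableEq CO]
    (σ0 : St V F CO)
    (hEnv : ∀ v, σ0.env v = none) (hHeap : ∀ c f, σ0.heap c f = none)
    (tr : List (Ev V F M OP CO))
    (hUniq : ∀ (i j : ℕ) (x x' : V) (o o' : OP) (c : CO),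
      tr[i]? = some (Ev.alloc x o c) → tr[j]? = some (Ev.alloc x' o' c) → i = j)
    (lsite : CO → OL)
    (Pi : Set (V × (OP ⊕ OL)))
    (hAlloc : ∀ (x : V) (o : OP) (c : CO), Ev.alloc x o c ∈ tr → (x, Sum.inl o) ∈ Pi)
    (hAssign : ∀ (x y : V) (a : OP ⊕ OL), Ev.assign x y ∈ tr → (y, a) ∈ Pi → (x, a) ∈ Pi)
    (hLS : ∀ (x y z w : V) (f : F) (a a' : OP ⊕ OL),
      Ev.load x y f ∈ tr → Ev.store z f w ∈ tr →
      (y, a') ∈ Pi → (z, a') ∈ Pi → (w, a) ∈ Pi → (x, a) ∈ Pi)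
    (hMissProg : ∀ (x : V) (m : M) (y x' : V) (o : OP) (c : CO),
      Ev.call x m y c ∈ tr → Ev.alloc x' o c ∈ tr → (x, Sum.inl o) ∈ Pi)
    (hMissLib : ∀ (x : V) (m : M) (y : V) (c : CO),
      Ev.call x m y c ∈ tr → (∀ (x' : V) (o : OP), Ev.alloc x' o c ∉ tr) →
      (x, Sum.inr (lsite c)) ∈ Pi) :
    (∀ (x : V) (o : OP), PDerives σ0 tr x (Sum.inl o) → (x, Sum.inl o) ∈ Pi) ∧
    (∀ (x : V) (c : CO), (∀ (x' : V) (o : OP), Ev.alloc x' o c ∉ tr) →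
      PDerives σ0 tr x (Sum.inr (footprint σ0 tr c)) →
      (x, Sum.inr (lsite c)) ∈ Pi) := by
  have hPi : FullCodeClosed tr lsite Pi := ⟨hAlloc, hAssign, hLS, hMissProg, hMissLib⟩
  have hsound := stateSound_stateAt hPi (.of_getElem? hUniq) hEnv hHeap
  exact ⟨fun x o h => h.mem_of_mem_fullCodeImage hPi hsound rfl,
    fun x c hlib h => h.mem_of_mem_fullCodeImage hPi hsound ⟨c, hlib, rfl, rfl⟩⟩

/-- Precision of ideal proxy objects: let `Pi` be a points-to set
computed with all code available, i.e. a set over `OP ⊕ OL` (program and library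
allocation sites) closed under the static rules for the statements of the trace
and containing (by its soundness) all edges of `Π̃*_miss`, where a library-call
return of a library-allocated object `c` contributes the edge to `c`'s library
allocation site `lsite c`. Then (i) for program sites `o`, `x ↪ o ∈ Π̃*` implies
`(x, o) ∈ Pi`, and (ii) for an ideal proxy `p̃ = footprint c` of a
library-allocated `c`, `x ↪ p̃ ∈ Π̃*` implies `(x, lsite c) ∈ Pi`. -/
theorem stmt12 {V F M OP OL CO : Type} [DecidableEq V] [DecidableEq F] [DecidableEq CO]
    (σ0 : St V F CO)
    (hEnv : ∀ v, σ0.env v = none) (hHeap : ∀ c f, σ0.heap c f = none)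
    (tr : List (Ev V F M OP CO))
    (hFresh : ∀ i x o c, tr[i]? = some (.alloc x o c) →
      (∀ v, (stateAt σ0 tr i).env v ≠ some c) ∧
      (∀ c' f, (stateAt σ0 tr i).heap c' f ≠ some c))
    (hUniq : ∀ (i j : ℕ) (x x' : V) (o o' : OP) (c : CO),
      tr[i]? = some (Ev.alloc x o c) → tr[j]? = some (Ev.alloc x' o' c) → i = j)
    (lsite : CO → OL)
    (Pi : Set (V × (OP ⊕ OL)))
    (hAlloc : ∀ (x : V) (o : OP) (c : CO), Ev.alloc x o c ∈ tr → (x, Sum.inl o) ∈ Pi)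
    (hAssign : ∀ (x y : V) (a : OP ⊕ OL), Ev.assign x y ∈ tr → (y, a) ∈ Pi → (x, a) ∈ Pi)
    (hLS : ∀ (x y z w : V) (f : F) (a a' : OP ⊕ OL),
      Ev.load x y f ∈ tr → Ev.store z f w ∈ tr →
      (y, a') ∈ Pi → (z, a') ∈ Pi → (w, a) ∈ Pi → (x, a) ∈ Pi)
    (hMissProg : ∀ (x : V) (m : M) (y x' : V) (o : OP) (c : CO),
      Ev.call x m y c ∈ tr → Ev.alloc x' o c ∈ tr → (x, Sum.inl o) ∈ Pi)
    (hMissLib : ∀ (x : V) (m : M) (y : V) (c : CO),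
      Ev.call x m y c ∈ tr → (∀ (x' : V) (o : OP), Ev.alloc x' o c ∉ tr) →
      (x, Sum.inr (lsite c)) ∈ Pi) :
    (∀ (x : V) (o : OP), PDerives σ0 tr x (Sum.inl o) → (x, Sum.inl o) ∈ Pi) ∧
    (∀ (x : V) (c : CO), (∀ (x' : V) (o : OP), Ev.alloc x' o c ∉ tr) →
      PDerives σ0 tr x (Sum.inr (footprint σ0 tr c)) →
      (x, Sum.inr (lsite c)) ∈ Pi) :=
  stmt12_general σ0 hEnv hHeap tr hUniq lsite Pi hAlloc hAssign hLS hMissProg hMissLib
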